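/- arXiv:1909.03864 — 2 statements merged into one kernel-verified Lean document; each statement's English description precedes it below -/
import Mathlib

section
/- Let α, β > 0 and let (u,f) be a pair of real-valued functions on (0,∞), absolutely continuous on compact subintervals, with lim_{r→0} u(r) = 1, lim_{r→0} f(r) = 0, lim_{r→∞} u(r) = 0, lim_{r→∞} f(r) = 1. Then I(u,f) = ∫₀^∞ [2 u'² + (1−u²)²/r² + α r² f'² + αβ f² u²] dr ≥ min{√(2αβ), 2√α}. -/
open MeasureTheory Filter Set Topology

noncomputable section

/-- `g` is absolutely continuous on every compact subinterval of `(0,∞)`,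
with almost-everywhere derivative `g'`. -/
def LocAC (g g' : ℝ → ℝ) : Prop :=
  ∀ a b : ℝ, 0 < a → a ≤ b →
    IntervalIntegrable g' volume a b ∧ g b - g a = ∫ t in a..b, g' t

/-- The integrand of the `γ = 0` energy functional
`I(u,f) = ∫₀^∞ [2 u'² + (1−u²)²/r² + α r² f'² + αβ f² u²] dr`. -/
def dmIntegrand0 (α β : ℝ) (u u' f f' : ℝ → ℝ) (r : ℝ) : ℝ :=
  2 * u' r ^ 2 + (1 - u r ^ 2) ^ 2 / r ^ 2
    + α * r ^ 2 * f' r ^ 2 + α * β * f r ^ 2 * u r ^ 2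

/-!
With `c = min (√(2αβ)) (2√α)` one has `c² ≤ 4α` and `c² ≤ 2αβ`, and completing squares gives the
Bogomolny-type pointwise bound `c · (f (1 - u²))' ≤ integrand`. The function `f (1 - u²)` is locally
absolutely continuous, tends to `0` at `0` and to `1` at `∞`, so integrating its derivative over
`[a, b]` and letting `a → 0`, `b → ∞` yields `I(u, f) ≥ c`.
-/

theorem ENNReal.ofReal_integral_le_lintegral_ofReal {α : Type*} [MeasurableSpace α] {μ : Measure α}
    (f : α → ℝ) : ENNReal.ofReal (∫ x, f x ∂μ) ≤ ∫⁻ x, ENNReal.ofReal (f x) ∂μ := by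
  by_cases hf : Integrable f μ
  · rw [integral_eq_lintegral_pos_part_sub_lintegral_neg_part hf]
    exact (ENNReal.ofReal_le_ofReal (sub_le_self _ ENNReal.toReal_nonneg)).trans
      ENNReal.ofReal_toReal_le
  · simp [integral_undef hf]

namespace LocAC

variable {g g' : ℝ → ℝ} {a b : ℝ}

theorem eq_add_integral (h : LocAC g g') (ha : 0 < a) {x : ℝ} (hax : a ≤ x) :
    g x = g a + ∫ t in a..x, g' t := by
  linarith [(h a x ha hax).2]

theorem absolutelyContinuousOnInterval (h : LocAC g g') (ha : 0 < a) (hab : a ≤ b) :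
    AbsolutelyContinuousOnInterval g a b := by
  have hprim := (h a b ha hab).1.absolutelyContinuousOnInterval_intervalIntegral
    (c := a) left_mem_uIcc
  have hrep : ∀ x ∈ uIcc a b, g x = g a + ∫ t in a..x, g' t := fun x hx =>
    h.eq_add_integral ha (uIcc_of_le hab ▸ hx).1
  refine Tendsto.congr' (eventually_inf_principal.2 (Eventually.of_forall fun E hE => ?_)) hprim
  refine Finset.sum_congr rfl fun i hi => ?_
  rw [hrep _ (hE.1 i hi).1, hrep _ (hE.1 i hi).2, dist_add_left]

theorem ae_hasDerivAt (h : LocAC g g') (ha : 0 < a) (hab : a ≤ b) :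
    ∀ᵐ x, x ∈ Ioo a b → HasDerivAt g (g' x) x := by
  filter_upwards [(h a b ha hab).1.ae_hasDerivAt_integral] with x hderiv hx
  have hx' : x ∈ uIcc a b := uIcc_of_le hab ▸ Ioo_subset_Icc_self hx
  refine ((hderiv hx' a left_mem_uIcc).const_add (g a)).congr_of_eventuallyEq ?_
  filter_upwards [Ioo_mem_nhds hx.1 hx.2] with y hy
  exact h.eq_add_integral ha hy.1.le

theorem mul {f f' : ℝ → ℝ} (hf : LocAC f f') (hg : LocAC g g') :
    LocAC (fun x => f x * g x) (fun x => f' x * g x + f x * g' x) := by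
  intro a b ha hab
  have hfac := hf.absolutelyContinuousOnInterval ha hab
  have hgac := hg.absolutelyContinuousOnInterval ha hab
  refine ⟨((hf a b ha hab).1.mul_continuousOn hgac.continuousOn).add
    ((hg a b ha hab).1.continuousOn_mul hfac.continuousOn), ?_⟩
  show f b * g b - f a * g a = ∫ x in a..b, f' x * g x + f x * g' x
  rw [← hfac.integral_deriv_mul_eq_sub hgac]
  -- derivatives on the open interval `(a, b + 1)` cover the integration domain `(a, b]`
  have hab' : a ≤ b + 1 := by linarith
  refine intervalIntegral.integral_congr_ae ?_
  filter_upwards [hf.ae_hasDerivAt ha hab', hg.ae_hasDerivAt ha hab'] with x hfx hgx hx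
  rw [uIoc_of_le hab] at hx
  have hx' : x ∈ Ioo a (b + 1) := ⟨hx.1, by linarith [hx.2]⟩
  rw [(hfx hx').deriv, (hgx hx').deriv]

theorem const_sub (h : LocAC g g') (c : ℝ) : LocAC (fun x => c - g x) (fun x => -g' x) := by
  intro a b ha hab
  obtain ⟨hint, hrep⟩ := h a b ha hab
  refine ⟨hint.neg, ?_⟩
  rw [intervalIntegral.integral_neg]
  linarith

theorem ofReal_mul_sub_le_lintegral (h : LocAC g g') {F : ℝ → ℝ} {c : ℝ}
    (hF : ∀ x, 0 < x → c * g' x ≤ F x) (ha : 0 < a) (hab : a ≤ b) :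
    ENNReal.ofReal (c * (g b - g a)) ≤ ∫⁻ x in Ioi 0, ENNReal.ofReal (F x) := by
  rw [(h a b ha hab).2, ← intervalIntegral.integral_const_mul, intervalIntegral.integral_of_le hab]
  calc _ ≤ ∫⁻ x in Ioc a b, ENNReal.ofReal (c * g' x) :=
        ENNReal.ofReal_integral_le_lintegral_ofReal _
    _ ≤ ∫⁻ x in Ioc a b, ENNReal.ofReal (F x) :=
        setLIntegral_mono' measurableSet_Ioc fun x hx =>
          ENNReal.ofReal_le_ofReal (hF x (ha.trans hx.1))
    _ ≤ ∫⁻ x in Ioi 0, ENNReal.ofReal (F x) :=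
        lintegral_mono_set fun x hx => ha.trans hx.1

end LocAC

theorem ENNReal.ofReal_mul_sub_le_of_tendsto {g : ℝ → ℝ} {L : ENNReal} {c ℓ₀ ℓ₁ : ℝ}
    (h : ∀ a b, 0 < a → a ≤ b → ENNReal.ofReal (c * (g b - g a)) ≤ L)
    (h₀ : Tendsto g (𝓝[>] 0) (𝓝 ℓ₀)) (h₁ : Tendsto g atTop (𝓝 ℓ₁)) :
    ENNReal.ofReal (c * (ℓ₁ - ℓ₀)) ≤ L := by
  have hb : ∀ b, 0 < b → ENNReal.ofReal (c * (g b - ℓ₀)) ≤ L := fun b hb =>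
    le_of_tendsto ((ENNReal.continuous_ofReal.tendsto _).comp
        ((tendsto_const_nhds.sub h₀).const_mul c))
      (eventually_of_mem (Ioc_mem_nhdsGT hb) fun a ha => h a b ha.1 ha.2)
  exact le_of_tendsto ((ENNReal.continuous_ofReal.tendsto _).comp
    ((h₁.sub tendsto_const_nhds).const_mul c)) ((eventually_gt_atTop 0).mono hb)

theorem mul_deriv_le_dmIntegrand0 {α β c r : ℝ} (u u' f f' : ℝ → ℝ)
    (hcα : c ^ 2 ≤ 4 * α) (hcβ : c ^ 2 ≤ 2 * (α * β)) (hr : 0 < r) :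
    c * (f' r * (1 - u r * u r) + f r * -(u' r * u r + u r * u' r)) ≤
      dmIntegrand0 α β u u' f f' r := by
  set A := (1 - u r ^ 2) / r
  have hA : 1 - u r ^ 2 = A * r := (div_mul_cancel₀ _ hr.ne').symm
  have hA2 : (1 - u r ^ 2) ^ 2 / r ^ 2 = A ^ 2 := by
    rw [hA, mul_pow, mul_div_assoc, div_self (pow_ne_zero 2 hr.ne'), mul_one]
  rw [dmIntegrand0, hA2, ← sq, hA]
  -- the difference is `(A - c r f'/2)² + 2 (u' + c f u/2)² + (α - c²/4) r² f'² + (αβ - c²/2) f² u²`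
  nlinarith [sq_nonneg (A - c / 2 * r * f' r), sq_nonneg (u' r + c / 2 * (f r * u r)),
    mul_nonneg (sub_nonneg.2 hcα) (sq_nonneg (r * f' r)),
    mul_nonneg (sub_nonneg.2 hcβ) (sq_nonneg (f r * u r))]

/-- for any admissible pair (energy possibly infinite, whence the
lower Lebesgue integral) the lower bound `I(u,f) ≥ min{√(2αβ), 2√α}` holds. -/
theorem energy_lower_bound (α β : ℝ) (hα : 0 < α) (hβ : 0 < β)
    (u u' f f' : ℝ → ℝ)
    (hu : LocAC u u') (hf : LocAC f f')
    (hu0 : Tendsto u (𝓝[>] (0 : ℝ)) (𝓝 1))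
    (hf0 : Tendsto f (𝓝[>] (0 : ℝ)) (𝓝 0))
    (huinf : Tendsto u atTop (𝓝 0))
    (hfinf : Tendsto f atTop (𝓝 1)) :
    ENNReal.ofReal (min (Real.sqrt (2 * α * β)) (2 * Real.sqrt α)) ≤
      ∫⁻ r in Ioi (0 : ℝ), ENNReal.ofReal (dmIntegrand0 α β u u' f f' r) := by
  set c := min (Real.sqrt (2 * α * β)) (2 * Real.sqrt α)
  have hc : 0 ≤ c := le_min (Real.sqrt_nonneg _) (by positivity)
  have hcα : c ^ 2 ≤ 4 * α := by
    nlinarith [min_le_right (Real.sqrt (2 * α * β)) (2 * Real.sqrt α), Real.sq_sqrt hα.le]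
  have hcβ : c ^ 2 ≤ 2 * (α * β) := by
    nlinarith [min_le_left (Real.sqrt (2 * α * β)) (2 * Real.sqrt α),
      Real.sq_sqrt (show 0 ≤ 2 * α * β by positivity)]
  have hG := hf.mul ((hu.mul hu).const_sub 1)
  have hG₀ : Tendsto (fun r => f r * (1 - u r * u r)) (𝓝[>] 0) (𝓝 0) := by
    simpa using hf0.mul (tendsto_const_nhds.sub (hu0.mul hu0))
  have hG₁ : Tendsto (fun r => f r * (1 - u r * u r)) atTop (𝓝 1) := by
    simpa using hfinf.mul (tendsto_const_nhds.sub (huinf.mul huinf))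
  simpa using ENNReal.ofReal_mul_sub_le_of_tendsto
    (fun a b ha hab => hG.ofReal_mul_sub_le_lintegral
      (fun r hr => mul_deriv_le_dmIntegrand0 u u' f f' hcα hcβ hr) ha hab) hG₀ hG₁
end
end

section
/- Let α, β > 0 and let u be a twice continuously differentiable nonnegative solution on (0,∞) of u'' = (αβ/2) u + u(u²−1)/r² with lim_{r→0} u(r) = 1 and lim_{r→∞} u(r) = 0, not identically 0 or 1. Then for every r > 0, exp(−√(αβ/2)·r) < u(r) < 1. -/
/-!
Both bounds come from a minimum principle on `(0, ∞)`: if `f` has nonnegative limits at `0⁺`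
and at `∞` and `f'' < 0` wherever `f ≤ 0`, then `f > 0`, for otherwise `f` attains a
nonpositive local minimum, where `f'' ≥ 0`. It applies to `1 - u`, since `u'' > 0` where
`u ≥ 1`, and to `u - exp (-√c r)`, where `c = αβ/2`: the exponential solves the linear part
`v'' = c v`, and where `u ≤ exp (-√c r) < 1` the cubic term only makes `u''` smaller.
-/

open Filter Set Topology

theorem IsLocalMin.nonneg_of_hasDerivAt_deriv {f f' : ℝ → ℝ} {r s : ℝ} (hmin : IsLocalMin f r)
    (hf : ∀ᶠ x in 𝓝 r, HasDerivAt f (f' x) x) (hf' : HasDerivAt f' s r) : 0 ≤ s := by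
  by_contra! hs
  have hderiv : deriv f =ᶠ[𝓝 r] f' := hf.mono fun x hx => hx.deriv
  -- The second derivative test makes `r` a local maximum too, so `f` is locally constant.
  have hmax : IsLocalMax f r :=
    isLocalMax_of_deriv_deriv_neg (by rwa [hderiv.deriv_eq, hf'.deriv])
      (by rw [hderiv.eq_of_nhds]; exact hmin.hasDerivAt_eq_zero hf.self_of_nhds)
      hf.self_of_nhds.continuousAt
  have hconst : ∀ᶠ x in 𝓝 r, f x = f r :=
    (hmin.and hmax).mono fun x hx => le_antisymm hx.2 hx.1
  have hzero : f' =ᶠ[𝓝 r] fun _ => 0 := by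
    filter_upwards [hconst.eventually_nhds, hf] with x hx hfx
    exact hfx.unique ((hasDerivAt_const x (f r)).congr_of_eventuallyEq hx)
  exact hs.ne ((hf'.congr_of_eventuallyEq hzero.symm).unique (hasDerivAt_const r 0))

theorem exists_isLocalMin_le_of_lt_tendsto {f : ℝ → ℝ} {L₀ L y : ℝ}
    (hf : ContinuousOn f (Ioi 0)) (h₀ : Tendsto f (𝓝[>] 0) (𝓝 L₀)) (h : Tendsto f atTop (𝓝 L))
    (hy : 0 < y) (hy₀ : f y < L₀) (hyL : f y < L) :
    ∃ r, 0 < r ∧ IsLocalMin f r ∧ f r ≤ f y := by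
  obtain ⟨a, hfa, ha, hay⟩ := ((h₀.eventually (eventually_gt_nhds hy₀)).and
    (Ioo_mem_nhdsGT hy)).exists
  obtain ⟨b, hfb, hyb⟩ := ((h.eventually (eventually_gt_nhds hyL)).and
    (eventually_gt_atTop y)).exists
  obtain ⟨r, hr, hrmin⟩ := isCompact_Icc.exists_isMinOn (nonempty_Icc.2 (hay.le.trans hyb.le))
    (hf.mono fun x hx => ha.trans_le hx.1)
  have hry : f r ≤ f y := hrmin ⟨hay.le, hyb.le⟩
  have har : a < r := hr.1.lt_of_ne (by rintro rfl; linarith)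
  have hrb : r < b := hr.2.lt_of_ne (by rintro rfl; linarith)
  exact ⟨r, ha.trans har, hrmin.isLocalMin (Icc_mem_nhds har hrb), hry⟩

theorem pos_of_deriv2_neg_where_nonpos {f f' f'' : ℝ → ℝ} {L₀ L : ℝ}
    (hf : ∀ x, 0 < x → HasDerivAt f (f' x) x) (hf' : ∀ x, 0 < x → HasDerivAt f' (f'' x) x)
    (h₀ : Tendsto f (𝓝[>] 0) (𝓝 L₀)) (h : Tendsto f atTop (𝓝 L)) (hL₀ : 0 ≤ L₀) (hL : 0 ≤ L)
    (hf''neg : ∀ x, 0 < x → f x ≤ 0 → f'' x < 0) {x : ℝ} (hx : 0 < x) : 0 < f x := by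
  by_contra! hfx
  obtain ⟨r, hr, hmin, hr0⟩ : ∃ r, 0 < r ∧ IsLocalMin f r ∧ f r ≤ 0 := by
    by_cases hneg : ∃ y, 0 < y ∧ f y < 0
    · obtain ⟨y, hy, hfy⟩ := hneg
      obtain ⟨r, hr, hmin, hry⟩ := exists_isLocalMin_le_of_lt_tendsto
        (fun z hz => (hf z hz).continuousAt.continuousWithinAt) h₀ h hy
        (hfy.trans_le hL₀) (hfy.trans_le hL)
      exact ⟨r, hr, hmin, hry.trans hfy.le⟩
    · push Not at hneg
      exact ⟨x, hx, Filter.mem_of_superset (Ioi_mem_nhds hx)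
        fun z hz => hfx.trans (hneg z hz), hfx⟩
  exact (hf''neg r hr hr0).not_ge
    (hmin.nonneg_of_hasDerivAt_deriv (eventually_of_mem (Ioi_mem_nhds hr) hf) (hf' r hr))

section RadialEquation

variable {c : ℝ} {u u' : ℝ → ℝ}

theorem lt_one_of_radial_ode (hc : 0 < c)
    (hode : ∀ r, 0 < r → HasDerivAt u (u' r) r ∧
      HasDerivAt u' (c * u r + u r * (u r ^ 2 - 1) / r ^ 2) r)
    (hu0 : Tendsto u (𝓝[>] 0) (𝓝 1)) (huinf : Tendsto u atTop (𝓝 0)) {r : ℝ} (hr : 0 < r) :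
    u r < 1 := by
  refine sub_pos.1 <| pos_of_deriv2_neg_where_nonpos (f := fun x => 1 - u x)
    (fun x hx => (hode x hx).1.const_sub 1) (fun x hx => (hode x hx).2.neg)
    (by simpa using hu0.const_sub 1) (by simpa using huinf.const_sub 1) le_rfl zero_le_one
    (fun x _ hux => ?_) hr
  have hu1 : 1 ≤ u x := by linarith
  have hcubic : 0 ≤ u x * (u x ^ 2 - 1) / x ^ 2 := by
    have : 0 ≤ u x ^ 2 - 1 := by nlinarith
    positivity
  nlinarith

theorem exp_lt_of_radial_ode (hc : 0 < c)
    (hode : ∀ r, 0 < r → HasDerivAt u (u' r) r ∧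
      HasDerivAt u' (c * u r + u r * (u r ^ 2 - 1) / r ^ 2) r)
    (hnonneg : ∀ r, 0 < r → 0 ≤ u r)
    (hu0 : Tendsto u (𝓝[>] 0) (𝓝 1)) (huinf : Tendsto u atTop (𝓝 0)) {r : ℝ} (hr : 0 < r) :
    Real.exp (-√c * r) < u r := by
  set k := √c
  have hk : 0 < k := Real.sqrt_pos.2 hc
  have hexp : ∀ x, HasDerivAt (fun y => Real.exp (-k * y)) (-k * Real.exp (-k * x)) x := fun x => by
    simpa [mul_comm] using ((hasDerivAt_id x).const_mul (-k)).exp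
  have hexp' : ∀ x, HasDerivAt (fun y => -k * Real.exp (-k * y)) (c * Real.exp (-k * x)) x :=
    fun x => by
      have h := (hexp x).const_mul (-k)
      rwa [← mul_assoc, neg_mul_neg, ← sq, Real.sq_sqrt hc.le] at h
  have hexp0 : Tendsto (fun x => Real.exp (-k * x)) (𝓝[>] 0) (𝓝 1) := by
    simpa using ((hexp 0).continuousAt.tendsto).mono_left nhdsWithin_le_nhds
  have hexpinf : Tendsto (fun x => Real.exp (-k * x)) atTop (𝓝 0) := by
    simpa only [neg_mul, Function.comp_def, id] using
      Real.tendsto_exp_neg_atTop_nhds_zero.comp (tendsto_id.const_mul_atTop hk)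
  refine sub_pos.1 <| pos_of_deriv2_neg_where_nonpos (f := fun x => u x - Real.exp (-k * x))
    (fun x hx => (hode x hx).1.sub (hexp x)) (fun x hx => (hode x hx).2.sub (hexp' x))
    (by simpa using hu0.sub hexp0) (by simpa using huinf.sub hexpinf) le_rfl le_rfl
    (fun x hx hux => ?_) hr
  have hu1 : u x < 1 := by
    have : Real.exp (-k * x) < 1 := Real.exp_lt_one_iff.2 (by nlinarith)
    linarith
  have hlin : c * (u x - Real.exp (-k * x)) ≤ 0 := mul_nonpos_of_nonneg_of_nonpos hc.le hux
  -- Strictness comes from the linear term where `u` vanishes and from the cubic one elsewhere.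
  rcases (hnonneg x hx).eq_or_lt with hzero | hpos
  · rw [← hzero]
    simpa using mul_pos hc (Real.exp_pos (-k * x))
  · have hcubic : u x * (u x ^ 2 - 1) / x ^ 2 < 0 :=
      div_neg_of_neg_of_pos (mul_neg_of_pos_of_neg hpos (by nlinarith)) (by positivity)
    linarith

end RadialEquation

theorem gamma_infty_pointwise_bounds_general (α β : ℝ) (hα : 0 < α) (hβ : 0 < β)
    (u u' : ℝ → ℝ)
    (hode : ∀ r : ℝ, 0 < r →
      HasDerivAt u (u' r) r ∧
      HasDerivAt u' (α * β / 2 * u r + u r * (u r ^ 2 - 1) / r ^ 2) r)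
    (hnonneg : ∀ r : ℝ, 0 < r → 0 ≤ u r)
    (hu0 : Tendsto u (𝓝[>] (0 : ℝ)) (𝓝 1))
    (huinf : Tendsto u atTop (𝓝 0)) :
    ∀ r : ℝ, 0 < r →
      Real.exp (-(Real.sqrt (α * β / 2)) * r) < u r ∧ u r < 1 := fun _ hr =>
  have hc : 0 < α * β / 2 := by positivity
  ⟨exp_lt_of_radial_ode hc hode hnonneg hu0 huinf hr, lt_one_of_radial_ode hc hode hu0 huinf hr⟩

/-- any nonnegative twice continuously differentiable solution of
`u'' = (αβ/2)u + u(u²−1)/r²` with `u(0⁺)=1`, `u(∞)=0`, not identically `0` or `1`,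
satisfies the global pointwise bounds `exp(−√(αβ/2) r) < u(r) < 1`. -/
theorem gamma_infty_pointwise_bounds (α β : ℝ) (hα : 0 < α) (hβ : 0 < β)
    (u u' : ℝ → ℝ)
    (hode : ∀ r : ℝ, 0 < r →
      HasDerivAt u (u' r) r ∧
      HasDerivAt u' (α * β / 2 * u r + u r * (u r ^ 2 - 1) / r ^ 2) r)
    (hnonneg : ∀ r : ℝ, 0 < r → 0 ≤ u r)
    (hu0 : Tendsto u (𝓝[>] (0 : ℝ)) (𝓝 1))
    (huinf : Tendsto u atTop (𝓝 0))
    (hne0 : ¬ ∀ r : ℝ, 0 < r → u r = 0)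
    (hne1 : ¬ ∀ r : ℝ, 0 < r → u r = 1) :
    ∀ r : ℝ, 0 < r →
      Real.exp (-(Real.sqrt (α * β / 2)) * r) < u r ∧ u r < 1 :=
  gamma_infty_pointwise_bounds_general α β hα hβ u u' hode hnonneg hu0 huinf
end
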